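/- Let O be a composition algebra (char k ≠ 2) and J the 3×3 Hermitian matrices over O. For u ∈ O and Y = [[t₁,y₃,ȳ₂],[ȳ₃,t₂,y₁],[y₂,ȳ₁,t₃]] ∈ J, the two products (A₁(u)·Y)·A₁(u)‾ᵗ and A₁(u)·(Y·A₁(u)‾ᵗ) agree and the result is again Hermitian (lies in J), where A₁(u) = [[1,0,0],[u,1,0],[N(u)/4, ū/2, 1]]. -/
import Mathlib


/-- A composition algebra over a field `k`: a unital (not necessarily associative)
`k`-algebra equipped with a nondegenerate multiplicative quadratic form `N`. -/
structure CompAlg (k : Type*) [Field k] (O : Type*) [NonAssocRing O] [Module k O] : Type _ where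
  smul_mul : ∀ (c : k) (x y : O), (c • x) * y = c • (x * y)
  mul_smul' : ∀ (c : k) (x y : O), x * (c • y) = c • (x * y)
  N : QuadraticForm k O
  norm_mul : ∀ x y : O, N (x * y) = N x * N y
  nondeg : ∀ x : O, (∀ y : O, QuadraticMap.polar (⇑N) x y = 0) → x = 0

namespace CompAlg

variable {k O : Type*} [Field k] [NonAssocRing O] [Module k O]

/-- The trace of an element: `tr x = b(x, 1)` where `b` is the polar form of `N`. -/
def tr (C : CompAlg k O) (x : O) : k := QuadraticMap.polar (⇑C.N) x 1

/-- Conjugation: `x̄ = tr(x)·1 - x`. -/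
def conj (C : CompAlg k O) (x : O) : O := C.tr x • (1 : O) - x

end CompAlg

namespace CompAlg

variable {k O : Type*} [Field k] [NonAssocRing O] [Module k O]

/-- The cubic determinant of a 3×3 Hermitian matrix over O with diagonal
(s₁,s₂,s₃) and off-diagonal octonion entries x₁, x₂, x₃. -/
def jdet (C : CompAlg k O) (s₁ s₂ s₃ : k) (x₁ x₂ x₃ : O) : k :=
  s₁ * s₂ * s₃ + C.tr ((x₁ * x₂) * x₃) - s₁ * C.N x₁ - s₂ * C.N x₂ - s₃ * C.N x₃

/-- The Hermitian 3×3 matrix over O determined by its diagonal scalars and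
off-diagonal octonion entries. -/
def toMat (C : CompAlg k O) (s₁ s₂ s₃ : k) (x₁ x₂ x₃ : O) : Matrix (Fin 3) (Fin 3) O :=
  !![s₁ • (1 : O), x₃, C.conj x₂; C.conj x₃, s₂ • (1 : O), x₁; x₂, C.conj x₁, s₃ • (1 : O)]

end CompAlg

namespace CompAlg
open QuadraticMap
variable {k O : Type*} [Field k] [NonAssocRing O] [Module k O]

/-- polar form abbreviation -/
def b (C : CompAlg k O) (x y : O) : k := polar (⇑C.N) x y

lemma b_def (C : CompAlg k O) (x y : O) : C.b x y = C.N (x+y) - C.N x - C.N y := rfl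
lemma b_comm (C : CompAlg k O) (x y : O) : C.b x y = C.b y x := polar_comm _ x y
lemma b_add_left (C : CompAlg k O) (x x' y : O) : C.b (x + x') y = C.b x y + C.b x' y := polar_add_left (Q := C.N) x x' y
lemma b_add_right (C : CompAlg k O) (x y y' : O) : C.b x (y + y') = C.b x y + C.b x y' := polar_add_right (Q := C.N) x y y'
lemma b_smul_left (C : CompAlg k O) (c : k) (x y : O) : C.b (c • x) y = c * C.b x y := by
  have := polar_smul_left (Q := C.N) c x y
  simpa [b] using this
lemma b_smul_right (C : CompAlg k O) (c : k) (x y : O) : C.b x (c • y) = c * C.b x y := by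
  have := polar_smul_right (Q := C.N) c x y
  simpa [b] using this
lemma b_sub_left (C : CompAlg k O) (x x' y : O) : C.b (x - x') y = C.b x y - C.b x' y := polar_sub_left (Q := C.N) x x' y

lemma bext (C : CompAlg k O) {a a' : O} (h : ∀ z : O, C.b a z = C.b a' z) : a = a' := by
  have := C.nondeg (a - a') (fun z => by
    have := C.b_sub_left a a' z
    rw [h] at this
    simpa [b] using this)
  exact sub_eq_zero.mp this

lemma tr_eq (C : CompAlg k O) (x : O) : C.tr x = C.b x 1 := rfl

lemma b_mul_right (C : CompAlg k O) (x y z : O) : C.b (x*y) (x*z) = C.N x * C.b y z := by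
  simp only [b_def, ← mul_add, C.norm_mul]; ring

lemma b_mul_left (C : CompAlg k O) (x y z : O) : C.b (x*z) (y*z) = C.b x y * C.N z := by
  simp only [b_def, ← add_mul, C.norm_mul]; ring

lemma b_quad (C : CompAlg k O) (x y z w : O) : C.b (x*y) (z*w) + C.b (x*w) (z*y) = C.b x z * C.b y w := by
  have h := C.b_mul_left x z (y+w)
  have hn : C.N (y+w) = C.N y + C.N w + C.b y w := by rw [b_def]; ring
  rw [mul_add, mul_add, C.b_add_left, C.b_add_right, C.b_add_right, hn,
    C.b_mul_left x z y, C.b_mul_left x z w] at h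
  linear_combination h

lemma star1 (C : CompAlg k O) (x y z : O) : C.b (x*y) z + C.b x (z*y) = C.b x z * C.tr y := by
  have h := C.b_quad x y z 1
  rwa [mul_one, mul_one, ← tr_eq] at h

lemma star2 (C : CompAlg k O) (x y z : O) : C.b (x*y) z + C.b (x*z) y = C.tr x * C.b y z := by
  have h := C.b_quad x y 1 z
  rwa [one_mul, one_mul, ← tr_eq] at h

lemma badj1 (C : CompAlg k O) (x y z : O) : C.b (C.conj x * y) z = C.b (x*z) y := by
  rw [conj, sub_mul, C.smul_mul, one_mul, C.b_sub_left, C.b_smul_left]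
  linear_combination -(1:k) * C.star2 x y z

lemma badj2 (C : CompAlg k O) (x y z : O) : C.b (y * C.conj x) z = C.b y (z*x) := by
  rw [conj, mul_sub, C.mul_smul', mul_one, C.b_sub_left, C.b_smul_left]
  linear_combination -(1:k) * C.star1 y x z

lemma conj_mul_self (C : CompAlg k O) (x : O) : C.conj x * x = C.N x • 1 := by
  apply C.bext; intro z
  rw [C.badj1, C.b_smul_left]
  calc C.b (x*z) x = C.b (x*z) (x*1) := by rw [mul_one]
    _ = C.N x * C.b z 1 := C.b_mul_right x z 1
    _ = C.N x * C.b 1 z := by rw [C.b_comm]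

lemma mul_conj_self (C : CompAlg k O) (x : O) : x * C.conj x = C.N x • 1 := by
  apply C.bext; intro z
  rw [C.badj2, C.b_smul_left]
  calc C.b x (z*x) = C.b (1*x) (z*x) := by rw [one_mul]
    _ = C.b 1 z * C.N x := C.b_mul_left 1 z x
    _ = C.N x * C.b 1 z := by ring

lemma conj_mul_cancel (C : CompAlg k O) (x y : O) : C.conj x * (x*y) = C.N x • y := by
  apply C.bext; intro z
  rw [C.badj1, C.b_smul_left, C.b_mul_right, C.b_comm z y]

lemma mul_conj_cancel (C : CompAlg k O) (x y : O) : (y*x) * C.conj x = C.N x • y := by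
  apply C.bext; intro z
  rw [C.badj2, C.b_smul_left, C.b_mul_left]
  ring

lemma sq (C : CompAlg k O) (x : O) : x*x = C.tr x • x - C.N x • 1 := by
  have h := C.mul_conj_self x
  rw [conj, mul_sub, C.mul_smul', mul_one] at h
  rw [← h]; abel

lemma left_alt (C : CompAlg k O) (x y : O) : x*(x*y) = (x*x)*y := by
  have h2 : x = C.tr x • (1:O) - C.conj x := by simp [conj]
  rw [C.sq, sub_mul, C.smul_mul, C.smul_mul, one_mul]
  nth_rewrite 1 [h2]
  rw [sub_mul, C.smul_mul, one_mul, C.conj_mul_cancel]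

lemma right_alt (C : CompAlg k O) (x y : O) : (y*x)*x = y*(x*x) := by
  have h2 : x = C.tr x • (1:O) - C.conj x := by simp [conj]
  rw [C.sq, mul_sub, C.mul_smul', C.mul_smul', mul_one]
  nth_rewrite 2 [h2]
  rw [mul_sub, C.mul_smul', mul_one, C.mul_conj_cancel]

lemma right_lin (C : CompAlg k O) (a x z : O) :
    (a*x)*z + (a*z)*x = a*(x*z) + a*(z*x) := by
  have h := C.right_alt (x+z) a
  simp only [mul_add, add_mul] at h
  rw [C.right_alt x a, C.right_alt z a] at h
  linear_combination (norm := abel1) h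

lemma flexible (C : CompAlg k O) (x y : O) : (x*y)*x = x*(y*x) := by
  have h := C.right_lin x x y
  rw [C.left_alt x y] at h
  exact add_left_cancel h

lemma tr_add (C : CompAlg k O) (x y : O) : C.tr (x+y) = C.tr x + C.tr y := C.b_add_left x y 1
lemma tr_smul (C : CompAlg k O) (c : k) (x : O) : C.tr (c • x) = c * C.tr x := C.b_smul_left c x 1
lemma tr_sub (C : CompAlg k O) (x y : O) : C.tr (x-y) = C.tr x - C.tr y := C.b_sub_left x y 1
lemma add_conj (C : CompAlg k O) (x : O) : x + C.conj x = C.tr x • 1 := by rw [conj]; abel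

lemma tr_mul (C : CompAlg k O) (x y : O) : C.tr (x*y) = C.tr x * C.tr y - C.b x y := by
  have h := C.star2 x y 1
  rw [mul_one, ← tr_eq, ← tr_eq] at h
  linear_combination h

lemma tr_mul_comm (C : CompAlg k O) (x y : O) : C.tr (x*y) = C.tr (y*x) := by
  rw [C.tr_mul, C.tr_mul, C.b_comm]; ring

lemma conj_add (C : CompAlg k O) (x y : O) : C.conj (x+y) = C.conj x + C.conj y := by
  rw [conj, conj, conj, C.tr_add, add_smul]; abel

lemma conj_smul (C : CompAlg k O) (c : k) (x : O) : C.conj (c • x) = c • C.conj x := by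
  rw [conj, conj, C.tr_smul, smul_sub, smul_smul]

lemma mul_lin (C : CompAlg k O) (x y : O) :
    x*y + y*x = C.tr x • y + C.tr y • x - C.b x y • (1:O) := by
  have h := C.sq (x+y)
  have hn : C.N (x+y) = C.N x + C.N y + C.b x y := by rw [b_def]; ring
  rw [mul_add, add_mul, add_mul, C.tr_add, hn, C.sq x, C.sq y] at h
  simp only [add_smul, smul_add] at h
  linear_combination (norm := abel1) h

lemma conj_mul (C : CompAlg k O) (x y : O) : C.conj (x*y) = C.conj y * C.conj x := by
  have hm : x*y = C.tr x • y + C.tr y • x - C.b x y • (1:O) - y*x :=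
    eq_sub_of_add_eq (C.mul_lin x y)
  rw [conj, conj, conj, C.tr_mul, mul_sub, C.mul_smul', mul_one, sub_mul, C.smul_mul,
    one_mul, hm]
  module

lemma norm_one (C : CompAlg k O) (a : O) (ha : a ≠ 0) : C.N 1 = 1 := by
  by_contra hne
  refine ha (C.nondeg a fun z => ?_)
  have h := C.b_mul_right 1 a z
  rw [one_mul, one_mul] at h
  have h0 : (C.N 1 - 1) * C.b a z = 0 := by linear_combination -(1:k) * h
  rcases mul_eq_zero.mp h0 with h' | h'
  · exact absurd (by linear_combination h' : C.N 1 = 1) hne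
  · exact h'

lemma tr_one (C : CompAlg k O) (h1 : C.N 1 = 1) : C.tr 1 = 2 := by
  have : (1:O) + 1 = (2:k) • (1:O) := by rw [two_smul]
  rw [tr_eq, b_def, this, QuadraticMap.map_smul, h1]
  norm_num

lemma conj_one (C : CompAlg k O) (h1 : C.N 1 = 1) : C.conj 1 = 1 := by
  rw [conj, C.tr_one h1, two_smul]; abel

lemma conj_conj (C : CompAlg k O) (h1 : C.N 1 = 1) (x : O) : C.conj (C.conj x) = x := by
  rw [conj, conj, C.tr_sub, C.tr_smul, C.tr_one h1]
  rw [show (C.tr x * 2 - C.tr x) = C.tr x by ring]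
  abel
end CompAlg

set_option maxHeartbeats 1600000 in
open Matrix in
/-- For u ∈ O and a Hermitian Y in the exceptional Jordan algebra, the two
products (A₁(u)·Y)·A₁(u)‾ᵗ and A₁(u)·(Y·A₁(u)‾ᵗ) agree and the result is again
Hermitian, where A₁(u) = [[1,0,0],[u,1,0],[N(u)/4, ū/2, 1]]. (char k ≠ 2) -/
theorem jordan_B1_well_defined {k O : Type*} [Field k] [NonAssocRing O] [Module k O]
    (C : CompAlg k O) (h2 : (2 : k) ≠ 0) (u : O) (t₁ t₂ t₃ : k) (y₁ y₂ y₃ : O) :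
    (!![(1 : O), 0, 0; u, 1, 0; (C.N u / 4) • (1 : O), (2 : k)⁻¹ • C.conj u, 1] *
          C.toMat t₁ t₂ t₃ y₁ y₂ y₃) *
        !![(1 : O), C.conj u, (C.N u / 4) • (1 : O); 0, 1, (2 : k)⁻¹ • u; 0, 0, 1] =
      !![(1 : O), 0, 0; u, 1, 0; (C.N u / 4) • (1 : O), (2 : k)⁻¹ • C.conj u, 1] *
        (C.toMat t₁ t₂ t₃ y₁ y₂ y₃ *
          !![(1 : O), C.conj u, (C.N u / 4) • (1 : O); 0, 1, (2 : k)⁻¹ • u; 0, 0, 1]) ∧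
    ∃ t₁' t₂' t₃' : k, ∃ y₁' y₂' y₃' : O,
      (!![(1 : O), 0, 0; u, 1, 0; (C.N u / 4) • (1 : O), (2 : k)⁻¹ • C.conj u, 1] *
          C.toMat t₁ t₂ t₃ y₁ y₂ y₃) *
        !![(1 : O), C.conj u, (C.N u / 4) • (1 : O); 0, 1, (2 : k)⁻¹ • u; 0, 0, 1] =
      C.toMat t₁' t₂' t₃' y₁' y₂' y₃' := by
  by_cases hO : ∀ x : O, x = 0
  · refine ⟨?_, t₁, t₂, t₃, y₁, y₂, y₃, ?_⟩ <;> ext i j <;> exact (hO _).trans (hO _).symm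
  · push_neg at hO
    obtain ⟨a, ha⟩ := hO
    have h1 : C.N 1 = 1 := C.norm_one a ha
    constructor
    · ext i j
      fin_cases i <;> fin_cases j <;>
        simp [CompAlg.toMat, Matrix.mul_apply, Fin.sum_univ_three, C.smul_mul, C.mul_smul',
          mul_add, add_mul, smul_add, smul_smul, Matrix.vecHead, Matrix.vecTail] <;>
        (try rw [C.flexible u y₃]) <;> (try rw [C.flexible (C.conj u) (C.conj y₃)]) <;>
        module
    · refine ⟨t₁, C.N u * t₁ + t₂ + C.tr (u*y₃),
        (C.N u / 4)*(C.N u / 4)*t₁ + (C.N u / 4)*(2:k)⁻¹*C.tr (y₃*u) + (2:k)⁻¹*(2:k)⁻¹*t₂*C.N u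
          + (2:k)⁻¹*C.tr (C.conj y₁ * u) + (C.N u / 4)*C.tr y₂ + t₃,
        ((C.N u / 4)*t₁) • u + (C.N u / 4) • C.conj y₃ + (2:k)⁻¹ • ((u*y₃)*u) + ((2:k)⁻¹*t₂) • u
          + u * C.conj y₂ + y₁,
        ((C.N u / 4)*t₁) • (1:O) + (2:k)⁻¹ • (C.conj u * C.conj y₃) + y₂,
        t₁ • C.conj u + y₃, ?_⟩
      have hca : u * y₃ + C.conj y₃ * C.conj u = C.tr (u*y₃) • (1:O) := by
        rw [← C.conj_mul]; exact C.add_conj _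
      have hcb : y₃ * u + C.conj u * C.conj y₃ = C.tr (y₃*u) • (1:O) := by
        rw [← C.conj_mul]; exact C.add_conj _
      have hcc : C.conj y₁ * u + C.conj u * y₁ = C.tr (C.conj y₁ * u) • (1:O) := by
        rw [show C.conj u * y₁ = C.conj (C.conj y₁ * u) from by rw [C.conj_mul, C.conj_conj h1]]
        exact C.add_conj _
      have hcd : y₂ + C.conj y₂ = C.tr y₂ • (1:O) := C.add_conj _
      ext i j
      fin_cases i <;> fin_cases j <;>
        simp [CompAlg.toMat, Matrix.mul_apply, Fin.sum_univ_three, C.smul_mul, C.mul_smul',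
          mul_add, add_mul, smul_add, smul_smul, Matrix.vecHead, Matrix.vecTail,
          C.conj_add, C.conj_smul, C.conj_mul, C.conj_conj h1, C.conj_one h1,
          C.mul_conj_self, C.conj_mul_self] <;>
        (try rw [C.flexible (C.conj u) (C.conj y₃)]) <;>
        first
          | module
          | linear_combination (norm := module) hca
          | linear_combination (norm := module)
              (((2:k)⁻¹*(C.N u/4)) • hcb + (2:k)⁻¹ • hcc + (C.N u/4) • hcd)
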